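/- Let S be a Schur ring over the infinite cyclic group Z = ⟨z⟩, and let C be the class of the partition D(S) containing z. Then C = {z} or C = {z, z^{-1}}. -/

import Mathlib

/-- The Hadamard (coefficientwise) product on the group algebra. -/
noncomputable def hadamard {F G : Type*} [Semiring F]
    (α β : MonoidAlgebra F G) : MonoidAlgebra F G :=
  MonoidAlgebra.ofCoeff (Finsupp.zipWith (· * ·) (mul_zero 0) α.coeff β.coeff)

/-- The simple quantity `C̄ = ∑_{g ∈ C} g` of a finite subset of `G`. -/
noncomputable def simpleQuantity (F : Type*) {G : Type*} [Semiring F] (C : Finset G) :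
    MonoidAlgebra F G :=
  ∑ g ∈ C, MonoidAlgebra.single g 1

/-- A partition of `G` into finite (nonempty) classes, i.e. a partition of finite support. -/
structure FinPartition (G : Type*) where
  classes : Set (Finset G)
  nonempty : ∀ C ∈ classes, C.Nonempty
  existsUnique_mem : ∀ g : G, ∃! C, C ∈ classes ∧ g ∈ C

/-- The Schur module associated to a partition of finite support: the `F`-span of the
simple quantities of the classes. -/
noncomputable def schurModule (F : Type*) {G : Type*} [Field F] (P : FinPartition G) :
    Submodule F (MonoidAlgebra F G) :=
  Submodule.span F (simpleQuantity F '' P.classes)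

/-- A Schur ring over a group `G` with coefficients in `F`, given by its partition
of finite support: `{1}` is a class, classes are closed under inversion, and the product
of two simple quantities is a finite `F`-linear combination of simple quantities. -/
structure SchurRing (F G : Type*) [Field F] [Group G] extends FinPartition G where
  one_mem : ({1} : Finset G) ∈ classes
  inv_mem : ∀ C ∈ classes, ∃ D ∈ classes, ∀ g : G, g ∈ D ↔ g⁻¹ ∈ C
  mul_mem : ∀ C ∈ classes, ∀ D ∈ classes,
    simpleQuantity F C * simpleQuantity F D ∈
      Submodule.span F (simpleQuantity F '' classes)

/-- The underlying Schur ring, as a submodule of the group algebra. -/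
noncomputable def SchurRing.carrier {F G : Type*} [Field F] [Group G] (S : SchurRing F G) :
    Submodule F (MonoidAlgebra F G) :=
  schurModule F S.toFinPartition

/-- A subset of `G` is an `S`-set if it is a union of classes of the partition. -/
def IsSSet {F G : Type*} [Field F] [Group G] (S : SchurRing F G) (X : Set G) : Prop :=
  ∃ E ⊆ S.classes, X = ⋃ C ∈ E, (C : Set G)

/-- The group ring `F[H]` of a subgroup, viewed inside `F[G]`. -/
noncomputable def groupRingOf (F : Type*) {G : Type*} [Field F] [Group G] (H : Subgroup G) :
    Submodule F (MonoidAlgebra F G) :=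
  Submodule.span F ((fun g => (MonoidAlgebra.single g 1 : MonoidAlgebra F G)) '' (H : Set G))


/-! Let `α = C̄ + (C⁻¹)‾`. It lies in `S`, so every power `α^k` has constant coefficients on
`C`; as `α` has natural-number coefficients and `F` has characteristic zero, the same holds for
the coefficients `c_k(n)` of `α^k` computed over `ℕ`. The Fourier transform of `α` is the real
function `ψ(θ) = ∑_{g ∈ C} 2 cos(gθ)`, so `2π c_k(n) = ∫_{-π}^{π} ψ(θ)^k cos(nθ) dθ`.
If `C` contained some `n` with `|n| ≥ 2`, then `∫ p(ψ(θ)) (cos θ - cos nθ) dθ = 0` for every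
polynomial `p`, hence, by Weierstrass approximation, also for `p(x) = max(x - r, 0)`. Since `z ∈ C`,
`ψ` attains its maximum only at `θ = 0`; for `r` close to `ψ(0)` this integrand is therefore
supported where `|θ| < π / |n|`, so it is nonnegative, and it is positive for small `θ > 0`:
a contradiction. Finally `1 ∉ C`, because `{1}` is a class. -/

open Real MeasureTheory Set Pointwise

section SchurModule

variable {G : Type*}

theorem coeff_simpleQuantity {R : Type*} [Semiring R] [DecidableEq G] (C : Finset G) (g : G) :
    (simpleQuantity R C).coeff g = if g ∈ C then 1 else 0 := by
  simp [simpleQuantity, MonoidAlgebra.coeff_sum, Finsupp.finsetSum_apply,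
    MonoidAlgebra.coeff_single, Finsupp.single_apply]

theorem mapRingHom_simpleQuantity [Monoid G] {R R' : Type*} [Semiring R] [Semiring R']
    (f : R →+* R')
    (C : Finset G) :
    MonoidAlgebra.mapRingHom G f (simpleQuantity R C) = simpleQuantity R' C := by
  simp [simpleQuantity]

theorem FinPartition.mem_iff_mem_of_mem (P : FinPartition G) {C D : Finset G}
    (hC : C ∈ P.classes) (hD : D ∈ P.classes) {g h : G} (hg : g ∈ C) (hh : h ∈ C) :
    g ∈ D ↔ h ∈ D := by
  constructor <;> intro hmem
  · exact (P.existsUnique_mem g).unique ⟨hD, hmem⟩ ⟨hC, hg⟩ ▸ hh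
  · exact (P.existsUnique_mem h).unique ⟨hD, hmem⟩ ⟨hC, hh⟩ ▸ hg

theorem FinPartition.coeff_eq_of_mem_schurModule {F : Type*} [Field F] (P : FinPartition G)
    {x : MonoidAlgebra F G} (hx : x ∈ schurModule F P) {C : Finset G} (hC : C ∈ P.classes)
    {g h : G} (hg : g ∈ C) (hh : h ∈ C) : x.coeff g = x.coeff h := by
  classical
  induction hx using Submodule.span_induction with
  | mem x hx =>
    obtain ⟨D, hD, rfl⟩ := hx
    simp only [coeff_simpleQuantity, P.mem_iff_mem_of_mem hC hD hg hh]
  | zero => rfl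
  | add x y _ _ hx hy => simp [hx, hy]
  | smul c x _ hx => simp [hx]

namespace SchurRing

variable {F : Type*} [Field F] [Group G] (S : SchurRing F G)

theorem simpleQuantity_mem_carrier {C : Finset G} (hC : C ∈ S.classes) :
    simpleQuantity F C ∈ S.carrier :=
  Submodule.subset_span ⟨C, hC, rfl⟩

theorem one_mem_carrier : (1 : MonoidAlgebra F G) ∈ S.carrier := by
  simpa [simpleQuantity, MonoidAlgebra.one_def] using S.simpleQuantity_mem_carrier S.one_mem

theorem mul_mem_carrier {x y : MonoidAlgebra F G} (hx : x ∈ S.carrier) (hy : y ∈ S.carrier) :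
    x * y ∈ S.carrier := by
  have hle : S.carrier * S.carrier ≤ S.carrier := by
    rw [carrier, schurModule, Submodule.span_mul_span, Submodule.span_le]
    rintro _ ⟨_, ⟨C, hC, rfl⟩, _, ⟨D, hD, rfl⟩, rfl⟩
    exact S.mul_mem C hC D hD
  exact hle (Submodule.mul_mem_mul hx hy)

theorem pow_mem_carrier {x : MonoidAlgebra F G} (hx : x ∈ S.carrier) (k : ℕ) :
    x ^ k ∈ S.carrier := by
  induction k with
  | zero => simpa using S.one_mem_carrier
  | succ k ih => simpa [pow_succ] using S.mul_mem_carrier ih hx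

theorem eq_singleton_one_of_one_mem {C : Finset G} (hC : C ∈ S.classes) (h1 : 1 ∈ C) :
    C = {1} :=
  (S.existsUnique_mem 1).unique ⟨hC, h1⟩ ⟨S.one_mem, Finset.mem_singleton_self 1⟩

end SchurRing

end SchurModule

section Fourier

open Complex in
noncomputable def expChar (θ : ℝ) : Multiplicative ℤ →* ℂ where
  toFun n := exp (((Multiplicative.toAdd n : ℤ) * θ : ℝ) * I)
  map_one' := by simp
  map_mul' m n := by
    rw [← Complex.exp_add, toAdd_mul]; push_cast; ring_nf

noncomputable def evalExp (θ : ℝ) : MonoidAlgebra ℕ (Multiplicative ℤ) →ₐ[ℕ] ℂ :=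
  MonoidAlgebra.lift ℕ ℂ (Multiplicative ℤ) (expChar θ)

theorem integral_cos_int_mul (m : ℤ) :
    ∫ θ in -π..π, cos (m * θ) = if m = 0 then 2 * π else 0 := by
  split_ifs with hm
  · simp [hm]; ring
  · have hm' : (m : ℝ) ≠ 0 := by exact_mod_cast hm
    rw [intervalIntegral.integral_comp_mul_left (fun x => cos x) hm', integral_cos,
      mul_neg, sin_neg, sin_int_mul_pi]
    simp

theorem re_evalExp_mul_exp (y : MonoidAlgebra ℕ (Multiplicative ℤ)) (n : ℤ) (θ : ℝ) :
    (evalExp θ y * Complex.exp (↑(-(n * θ)) * Complex.I)).re =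
      ∑ g ∈ y.coeff.support, y.coeff g * cos ((Multiplicative.toAdd g - n : ℤ) * θ) := by
  rw [evalExp, MonoidAlgebra.lift_apply, Finsupp.sum, Finset.sum_mul, Complex.re_sum]
  refine Finset.sum_congr rfl fun g _ => ?_
  rw [nsmul_eq_mul, mul_assoc, expChar, MonoidHom.coe_mk, OneHom.coe_mk, ← Complex.exp_add,
    ← add_mul, ← Complex.ofReal_add, ← Complex.ofReal_natCast, Complex.re_ofReal_mul,
    Complex.exp_ofReal_mul_I_re]
  push_cast; ring_nf

theorem integral_re_evalExp_mul_exp (y : MonoidAlgebra ℕ (Multiplicative ℤ)) (n : ℤ) :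
    ∫ θ in -π..π, (evalExp θ y * Complex.exp (↑(-(n * θ)) * Complex.I)).re =
      2 * π * y.coeff (Multiplicative.ofAdd n) := by
  simp_rw [re_evalExp_mul_exp]
  rw [intervalIntegral.integral_finsetSum fun g _ =>
    (by fun_prop : Continuous _).intervalIntegrable _ _]
  simp_rw [intervalIntegral.integral_const_mul, integral_cos_int_mul, sub_eq_zero]
  rw [Finset.sum_eq_single (Multiplicative.ofAdd n)]
  · simp [mul_comm]
  · intro g _ hg
    rw [if_neg fun h => hg (by simp [← h]), mul_zero]
  · intro hn
    rw [Finsupp.notMem_support_iff.1 hn]; simp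

noncomputable def cosSum (C : Finset (Multiplicative ℤ)) (θ : ℝ) : ℝ :=
  ∑ g ∈ C, 2 * cos ((Multiplicative.toAdd g : ℤ) * θ)

theorem continuous_cosSum (C : Finset (Multiplicative ℤ)) : Continuous (cosSum C) := by
  unfold cosSum; fun_prop

theorem evalExp_simpleQuantity_add_inv (C : Finset (Multiplicative ℤ)) (θ : ℝ) :
    evalExp θ (simpleQuantity ℕ C + simpleQuantity ℕ C⁻¹) = cosSum C θ := by
  simp only [simpleQuantity, map_add, map_sum, evalExp, MonoidAlgebra.lift_single, one_smul,
    Finset.sum_inv_index, ← Finset.sum_add_distrib, cosSum, Complex.ofReal_sum]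
  refine Finset.sum_congr rfl fun g _ => ?_
  rw [Complex.ofReal_mul, Complex.ofReal_ofNat, Complex.ofReal_cos, Complex.two_cos]
  simp [expChar, neg_mul]

theorem integral_cosSum_pow_mul_cos (C : Finset (Multiplicative ℤ)) (k : ℕ) (n : ℤ) :
    ∫ θ in -π..π, cosSum C θ ^ k * cos (n * θ) =
      2 * π * ((simpleQuantity ℕ C + simpleQuantity ℕ C⁻¹) ^ k).coeff (Multiplicative.ofAdd n) := by
  rw [← integral_re_evalExp_mul_exp]
  congr 1 with θ
  rw [map_pow, evalExp_simpleQuantity_add_inv, ← Complex.ofReal_pow, Complex.re_ofReal_mul,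
    Complex.exp_ofReal_mul_I_re, cos_neg]

theorem coeff_pow_simpleQuantity_add_inv_ofAdd_neg (C : Finset (Multiplicative ℤ)) (k : ℕ)
    (n : ℤ) :
    ((simpleQuantity ℕ C + simpleQuantity ℕ C⁻¹) ^ k).coeff (Multiplicative.ofAdd (-n)) =
      ((simpleQuantity ℕ C + simpleQuantity ℕ C⁻¹) ^ k).coeff (Multiplicative.ofAdd n) := by
  have h := integral_cosSum_pow_mul_cos C k (-n)
  simp_rw [Int.cast_neg, neg_mul, cos_neg, integral_cosSum_pow_mul_cos] at h
  exact_mod_cast (mul_left_cancel₀ (by positivity) h).symm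

theorem cosSum_add_le {C : Finset (Multiplicative ℤ)} (h1 : Multiplicative.ofAdd 1 ∈ C)
    (θ : ℝ) : cosSum C θ + 2 * (1 - cos θ) ≤ cosSum C 0 := by
  have hdiff : cosSum C 0 - cosSum C θ =
      ∑ g ∈ C, 2 * (1 - cos ((Multiplicative.toAdd g : ℤ) * θ)) := by
    simp only [cosSum, mul_zero, cos_zero, ← Finset.sum_sub_distrib, mul_sub, mul_one]
  have hterm := Finset.single_le_sum (f := fun g : Multiplicative ℤ =>
      2 * (1 - cos ((Multiplicative.toAdd g : ℤ) * θ)))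
    (fun g _ => by nlinarith [cos_le_one ((Multiplicative.toAdd g : ℤ) * θ)]) h1
  simp only [toAdd_ofAdd, Int.cast_one, one_mul] at hterm
  linarith

end Fourier

section Analysis

theorem intervalIntegral_comp_mul_eq_zero_of_forall_pow {u f : ℝ → ℝ} {a b : ℝ}
    (hu : Continuous u) (hf : Continuous f) (H : ∀ k : ℕ, ∫ x in a..b, u x ^ k * f x = 0)
    {h : ℝ → ℝ} (hh : Continuous h) : ∫ x in a..b, h (u x) * f x = 0 := by
  have hpoly : ∀ p : Polynomial ℝ, ∫ x in a..b, p.eval (u x) * f x = 0 := by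
    intro p
    simp_rw [Polynomial.eval_eq_sum_range, Finset.sum_mul, mul_assoc]
    rw [intervalIntegral.integral_finsetSum fun i _ =>
      (by fun_prop : Continuous _).intervalIntegrable _ _]
    simp [intervalIntegral.integral_const_mul, H]
  obtain ⟨R, hR⟩ := isCompact_uIcc.exists_bound_of_continuousOn (f := u) hu.continuousOn
  obtain ⟨K, hK⟩ := isCompact_uIcc.exists_bound_of_continuousOn (f := f) hf.continuousOn
  refine eq_of_forall_dist_le fun ε hε => ?_
  set δ := ε / ((|K| + 1) * (|b - a| + 1))
  have hδ : 0 < δ := by positivity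
  obtain ⟨p, hp⟩ := exists_polynomial_near_of_continuousOn (-R) R h hh.continuousOn δ hδ
  have hdiff : ∫ x in a..b, h (u x) * f x = ∫ x in a..b, (h (u x) - p.eval (u x)) * f x := by
    simp_rw [sub_mul]
    rw [intervalIntegral.integral_sub ((by fun_prop : Continuous _).intervalIntegrable _ _)
      ((by fun_prop : Continuous _).intervalIntegrable _ _), hpoly, sub_zero]
  rw [dist_zero_right, hdiff]
  calc ‖∫ x in a..b, (h (u x) - p.eval (u x)) * f x‖ ≤ δ * |K| * |b - a| := by
        refine intervalIntegral.norm_integral_le_of_norm_le_const fun x hx => ?_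
        have hx' := uIoc_subset_uIcc hx
        rw [norm_mul, Real.norm_eq_abs, abs_sub_comm]
        exact mul_le_mul (hp _ (abs_le.1 (hR x hx'))).le ((hK x hx').trans (le_abs_self K))
          (norm_nonneg _) hδ.le
    _ ≤ δ * ((|K| + 1) * (|b - a| + 1)) := by
        rw [mul_assoc]; gcongr <;> linarith
    _ = ε := div_mul_cancel₀ _ (by positivity)

theorem intervalIntegral_pos_of_continuous_of_nonneg {g : ℝ → ℝ} {a b x₀ : ℝ}
    (hg : Continuous g) (hnonneg : ∀ x ∈ Icc a b, 0 ≤ g x) (hx₀ : x₀ ∈ Ioo a b)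
    (hpos : 0 < g x₀) : 0 < ∫ x in a..b, g x := by
  have hab : a < b := hx₀.1.trans hx₀.2
  rw [intervalIntegral.integral_pos_iff_support_of_nonneg_ae'
    ((ae_restrict_iff' measurableSet_uIoc).2 (Filter.Eventually.of_forall fun x hx =>
      hnonneg x (uIoc_subset_uIcc.trans (uIcc_of_le hab.le).subset hx)))
    (hg.intervalIntegrable _ _)]
  refine ⟨hab, (IsOpen.measure_pos volume ((isOpen_ne_fun hg continuous_const).inter isOpen_Ioo)
    ⟨x₀, hpos.ne', hx₀⟩).trans_le (measure_mono ?_)⟩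
  exact inter_subset_inter_right _ Ioo_subset_Ioc_self

theorem cos_mul_le_cos_of_cos_pi_div_lt {a θ : ℝ} (ha : 1 ≤ a) (hθ : |θ| ≤ π)
    (h : cos (π / a) < cos θ) : cos (a * θ) ≤ cos θ := by
  have ha₀ : 0 < a := by linarith
  have hθa : |θ| < π / a := by
    rw [← cos_abs θ] at h
    exact (strictAntiOn_cos.lt_iff_gt ⟨by positivity, div_le_self pi_pos.le ha⟩
      ⟨abs_nonneg θ, hθ⟩).1 h
  rw [← cos_abs θ, ← cos_abs (a * θ), abs_mul, abs_of_pos ha₀]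
  exact cos_le_cos_of_nonneg_of_le_pi (abs_nonneg θ) ((lt_div_iff₀' ha₀).1 hθa).le
    (le_mul_of_one_le_left (abs_nonneg θ) ha)

theorem not_forall_integral_pow_mul_cos_eq {φ : ℝ → ℝ} (hφ : Continuous φ) {c : ℝ} (hc : 0 < c)
    (hmax : ∀ θ, φ θ + c * (1 - cos θ) ≤ φ 0) {a : ℝ} (ha : 1 < a) :
    ¬ ∀ k : ℕ, ∫ θ in -π..π, φ θ ^ k * cos (a * θ) = ∫ θ in -π..π, φ θ ^ k * cos θ := by
  intro H
  have hθ₀ : 0 < π / a := by positivity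
  have hθ₀π : π / a < π := div_lt_self pi_pos ha
  have hcos₀ : cos (π / a) < 1 := by
    simpa using cos_lt_cos_of_nonneg_of_le_pi le_rfl hθ₀π.le hθ₀
  set r := φ 0 - c * (1 - cos (π / a))
  -- `φ θ > r` forces `cos θ > cos (π / a)`, where `cos (a * θ) ≤ cos θ`
  set g : ℝ → ℝ := fun θ => max (φ θ - r) 0 * (cos θ - cos (a * θ))
  have hg : Continuous g := by fun_prop
  have hzero : ∫ θ in -π..π, g θ = 0 := by
    refine intervalIntegral_comp_mul_eq_zero_of_forall_pow hφ (by fun_prop) (fun k => ?_)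
      (by fun_prop : Continuous fun x => max (x - r) 0)
    simp_rw [mul_sub]
    rw [intervalIntegral.integral_sub ((by fun_prop : Continuous _).intervalIntegrable _ _)
      ((by fun_prop : Continuous _).intervalIntegrable _ _), H, sub_self]
  have hnonneg : ∀ θ ∈ Icc (-π) π, 0 ≤ g θ := by
    intro θ hθ
    rcases le_or_gt (φ θ) r with hle | hlt
    · simp [g, max_eq_right (sub_nonpos.2 hle)]
    · have hcos : cos (π / a) < cos θ := by
        by_contra! hcos
        nlinarith [hmax θ]
      exact mul_nonneg (le_max_right _ _) (sub_nonneg.2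
        (cos_mul_le_cos_of_cos_pi_div_lt ha.le (abs_le.2 hθ) hcos))
  obtain ⟨θ₁, ⟨hθ₁, hθ₁a⟩, hφθ₁⟩ : ∃ θ₁ ∈ Ioo 0 (π / a), r < φ θ₁ :=
    (Filter.Eventually.and (Ioo_mem_nhdsGT hθ₀) (hφ.continuousWithinAt.eventually
      (lt_mem_nhds (show r < φ 0 by nlinarith)))).exists
  have hpos : 0 < g θ₁ := by
    refine mul_pos (lt_max_of_lt_left (sub_pos.2 hφθ₁)) (sub_pos.2 ?_)
    refine cos_lt_cos_of_nonneg_of_le_pi hθ₁.le ?_ (by nlinarith)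
    calc a * θ₁ ≤ a * (π / a) := by gcongr
      _ = π := mul_div_cancel₀ _ (by positivity)
  exact (intervalIntegral_pos_of_continuous_of_nonneg hg hnonneg
    ⟨by linarith [pi_pos], hθ₁a.trans hθ₀π⟩ hpos).ne' hzero

end Analysis

theorem eq_one_or_neg_one_of_forall_coeff_pow_eq {C : Finset (Multiplicative ℤ)}
    (h1 : Multiplicative.ofAdd 1 ∈ C) {n : ℤ} (hn : n ≠ 0)
    (H : ∀ k : ℕ,
      ((simpleQuantity ℕ C + simpleQuantity ℕ C⁻¹) ^ k).coeff (Multiplicative.ofAdd n) =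
        ((simpleQuantity ℕ C + simpleQuantity ℕ C⁻¹) ^ k).coeff (Multiplicative.ofAdd 1)) :
    n = 1 ∨ n = -1 := by
  have H' : ∀ k : ℕ,
      ((simpleQuantity ℕ C + simpleQuantity ℕ C⁻¹) ^ k).coeff (Multiplicative.ofAdd |n|) =
        ((simpleQuantity ℕ C + simpleQuantity ℕ C⁻¹) ^ k).coeff (Multiplicative.ofAdd 1) := by
    intro k
    rcases abs_choice n with h | h <;> rw [h]
    · exact H k
    · rw [coeff_pow_simpleQuantity_add_inv_ofAdd_neg, H k]
  by_contra hn1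
  have h2 : 2 ≤ |n| := by rcases abs_cases n with ⟨h, _⟩ | ⟨h, _⟩ <;> omega
  refine not_forall_integral_pow_mul_cos_eq (continuous_cosSum C) two_pos (cosSum_add_le h1)
    (a := ((|n| : ℤ) : ℝ)) (by exact_mod_cast h2) fun k => ?_
  rw [integral_cosSum_pow_mul_cos, H' k, ← integral_cosSum_pow_mul_cos C k 1]
  simp

theorem stmt13 {F : Type*} [Field F] [CharZero F]
    (S : SchurRing F (Multiplicative ℤ))
    (z : Multiplicative ℤ) (hz : z = Multiplicative.ofAdd 1)
    (C : Finset (Multiplicative ℤ)) (hC : C ∈ S.classes) (hzC : z ∈ C) :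
    C = {z} ∨ C = {z, z⁻¹} := by
  subst hz
  obtain ⟨D, hD, hDinv⟩ := S.inv_mem C hC
  obtain rfl : D = C⁻¹ := by ext g; rw [hDinv, Finset.mem_inv']
  have hcoeff : ∀ g ∈ C, ∀ k : ℕ,
      ((simpleQuantity ℕ C + simpleQuantity ℕ C⁻¹) ^ k).coeff g =
        ((simpleQuantity ℕ C + simpleQuantity ℕ C⁻¹) ^ k).coeff (Multiplicative.ofAdd 1) := by
    intro g hg k
    have hmem := S.pow_mem_carrier (S.carrier.add_mem (S.simpleQuantity_mem_carrier hC)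
      (S.simpleQuantity_mem_carrier hD)) k
    rw [← mapRingHom_simpleQuantity (Nat.castRingHom F) C,
      ← mapRingHom_simpleQuantity (Nat.castRingHom F) C⁻¹, ← map_add, ← map_pow] at hmem
    have h := S.coeff_eq_of_mem_schurModule hmem hC hg hzC
    simpa only [MonoidAlgebra.coeff_mapRingHom, Nat.coe_castRingHom, Nat.cast_inj] using h
  have hsub : ∀ g ∈ C, g = Multiplicative.ofAdd 1 ∨ g = (Multiplicative.ofAdd 1)⁻¹ := by
    intro g hg
    have hg₀ : Multiplicative.toAdd g ≠ 0 := fun h => by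
      rw [S.eq_singleton_one_of_one_mem hC (by rwa [← ofAdd_toAdd g, h] at hg)] at hzC
      simp at hzC
    rcases eq_one_or_neg_one_of_forall_coeff_pow_eq hzC hg₀ (by simpa using hcoeff g hg)
      with h | h
    · exact Or.inl (by rw [← ofAdd_toAdd g, h])
    · exact Or.inr (by rw [← ofAdd_toAdd g, h, ofAdd_neg])
  by_cases hinv : (Multiplicative.ofAdd 1)⁻¹ ∈ C
  · exact Or.inr (Finset.Subset.antisymm (fun g hg => by simpa using hsub g hg)
      (Finset.insert_subset hzC (Finset.singleton_subset_iff.2 hinv)))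
  · exact Or.inl (Finset.eq_singleton_iff_unique_mem.2
      ⟨hzC, fun g hg => (hsub g hg).resolve_right fun h => hinv (h ▸ hg)⟩)
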